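/- arXiv:2001.05918 — 5 statements merged into one kernel-verified Lean document; each statement's English description precedes it below -/
import Mathlib

section
/- In a synchronous message-passing system with p nodes where at any iteration the set of delayed (undelivered) messages has size at most f, and stochastic gradients satisfy E[‖G̃(x)‖²] ≤ M², each node's view satisfies E[‖v_t^i - x_t‖²] ≤ α²f²M²/p² for all iterations t. -/
/-!
The disagreement `v - x` is `(α/p) • ∑_{k ∈ K} Y k`. By Cauchy–Schwarz,
`‖∑_{k ∈ K} Y k‖² ≤ |K| ∑_{k ∈ K} ‖Y k‖²` pointwise; integrating and using the second-moment
bound for each of the `|K| ≤ f` terms gives `E‖∑ Y k‖² ≤ |K|² M²`, and the factor `(α/p)²`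
comes out of the norm.
-/

open MeasureTheory Finset

theorem norm_sum_sq_le_card_mul_sum_norm_sq {ι E : Type*} [SeminormedAddCommGroup E]
    (K : Finset ι) (y : ι → E) :
    ‖∑ k ∈ K, y k‖ ^ 2 ≤ #K * ∑ k ∈ K, ‖y k‖ ^ 2 :=
  calc ‖∑ k ∈ K, y k‖ ^ 2 ≤ (∑ k ∈ K, ‖y k‖) ^ 2 := by gcongr; exact norm_sum_le K y
    _ ≤ #K * ∑ k ∈ K, ‖y k‖ ^ 2 := sq_sum_le_card_mul_sum_sq

theorem integral_norm_sum_sq_le {ι Ω E : Type*} [MeasurableSpace Ω] [SeminormedAddCommGroup E]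
    {μ : Measure Ω} (K : Finset ι) (Y : ι → Ω → E) {C : ℝ}
    (hint : ∀ k ∈ K, Integrable (fun ω => ‖Y k ω‖ ^ 2) μ)
    (hY : ∀ k ∈ K, ∫ ω, ‖Y k ω‖ ^ 2 ∂μ ≤ C) :
    ∫ ω, ‖∑ k ∈ K, Y k ω‖ ^ 2 ∂μ ≤ #K ^ 2 * C :=
  calc ∫ ω, ‖∑ k ∈ K, Y k ω‖ ^ 2 ∂μ ≤ ∫ ω, #K * ∑ k ∈ K, ‖Y k ω‖ ^ 2 ∂μ :=
        integral_mono_of_nonneg (.of_forall fun _ => by positivity)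
          ((integrable_finsetSum K hint).const_mul _)
          (.of_forall fun ω => norm_sum_sq_le_card_mul_sum_norm_sq K (Y · ω))
    _ = #K * ∑ k ∈ K, ∫ ω, ‖Y k ω‖ ^ 2 ∂μ := by
        rw [integral_const_mul, integral_finsetSum K hint]
    _ ≤ #K * (#K * C) := by
        gcongr
        simpa using sum_le_card_nsmul K _ C hY
    _ = #K ^ 2 * C := by ring

theorem stmt12_general {d : ℕ} {ι Ω : Type*} [MeasurableSpace Ω]
    (μ : Measure Ω)
    (α M : ℝ) (p f : ℕ)
    (K : Finset ι) (hK : K.card ≤ f)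
    (Y : ι → Ω → EuclideanSpace ℝ (Fin d))
    (hY : ∀ k ∈ K, ∫ ω, ‖Y k ω‖ ^ 2 ∂μ ≤ M ^ 2)
    (hint : ∀ k ∈ K, Integrable (fun ω => ‖Y k ω‖ ^ 2) μ)
    (v x : Ω → EuclideanSpace ℝ (Fin d))
    (hdiff : ∀ ω, v ω - x ω = ∑ k ∈ K, (α / p) • Y k ω) :
    ∫ ω, ‖v ω - x ω‖ ^ 2 ∂μ ≤ α ^ 2 * (f : ℝ) ^ 2 * M ^ 2 / (p : ℝ) ^ 2 := by
  have hnorm : ∀ ω, ‖v ω - x ω‖ ^ 2 = (α / p) ^ 2 * ‖∑ k ∈ K, Y k ω‖ ^ 2 := fun ω => by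
    rw [hdiff ω, ← smul_sum, norm_smul, mul_pow, Real.norm_eq_abs, sq_abs]
  calc ∫ ω, ‖v ω - x ω‖ ^ 2 ∂μ = (α / p) ^ 2 * ∫ ω, ‖∑ k ∈ K, Y k ω‖ ^ 2 ∂μ := by
        simp_rw [hnorm, integral_const_mul]
    _ ≤ (α / p) ^ 2 * (#K ^ 2 * M ^ 2) := by
        gcongr
        exact integral_norm_sum_sq_le K Y hint hY
    _ ≤ (α / p) ^ 2 * (f ^ 2 * M ^ 2) := by gcongr
    _ = α ^ 2 * (f : ℝ) ^ 2 * M ^ 2 / (p : ℝ) ^ 2 := by ring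

/-- message-omission elastic consistency bound.  At any iteration the number
of delayed (undelivered) messages is at most `f`, so node `i`'s view differs from the true
parameter `x_t` by the sum of at most `f` missing terms, each of the form `(α/p)·G̃(v_s^j)`
with second moment `≤ M²`.  Then `E‖v_t^i - x_t‖² ≤ α² f² M² / p²`. -/
theorem stmt12 {d : ℕ} {ι Ω : Type*} [MeasurableSpace Ω]
    (μ : Measure Ω) [IsProbabilityMeasure μ]
    (α M : ℝ) (hM : 0 ≤ M) (p f : ℕ) (hp : 0 < p)
    (K : Finset ι) (hK : K.card ≤ f)
    (Y : ι → Ω → EuclideanSpace ℝ (Fin d))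
    (hY : ∀ k ∈ K, ∫ ω, ‖Y k ω‖ ^ 2 ∂μ ≤ M ^ 2)
    (hint : ∀ k ∈ K, Integrable (fun ω => ‖Y k ω‖ ^ 2) μ)
    (v x : Ω → EuclideanSpace ℝ (Fin d))
    (hdiff : ∀ ω, v ω - x ω = ∑ k ∈ K, (α / p) • Y k ω) :
    ∫ ω, ‖v ω - x ω‖ ^ 2 ∂μ ≤ α ^ 2 * (f : ℝ) ^ 2 * M ^ 2 / (p : ℝ) ^ 2 :=
  stmt12_general μ α M p f K hK Y hY hint v x hdiff
end

section
/- In an asynchronous shared-memory system where a processor's view v_t satisfies v_t[j] = x_{t-τ_t^j}[j] componentwise with all delays τ_t^j ≤ τ_max, and each update step satisfies E[‖x_{s+1} - x_s‖²] ≤ α²M², the view discrepancy satisfies E[‖x_t - v_t‖²] ≤ d·τ_max²·α²·M² where d is the dimension. -/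
/-!
Coordinate `j` of `x_t - v_t` telescopes over the last `τ j ≤ τmax` updates, so it is bounded by
the sum of the norms of the last `τmax` updates; by Cauchy–Schwarz its square is at most `τmax`
times the sum of their squared norms. Summing over the `d` coordinates and integrating against
`E‖x_{s+1} - x_s‖² ≤ α²M²` gives the bound.
-/

open MeasureTheory Finset

section DelayedView

variable {ι : Type*} [Fintype ι]

theorem abs_apply_sub_le_sum_Ico_norm_sub (y : ℕ → EuclideanSpace ℝ ι) (j : ι) {a b : ℕ}
    (hab : a ≤ b) : |y b j - y a j| ≤ ∑ s ∈ Ico a b, ‖y (s + 1) - y s‖ := by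
  rw [← Real.dist_eq, dist_comm]
  refine (dist_le_Ico_sum_dist (fun s => y s j) hab).trans (sum_le_sum fun s _ => ?_)
  rw [dist_comm, ← dist_eq_norm]
  exact PiLp.dist_apply_le _ _ j

theorem abs_sub_view_apply_le (y : ℕ → EuclideanSpace ℝ ι) (v : EuclideanSpace ℝ ι)
    (τ : ι → ℕ) {t n : ℕ} (hτ : ∀ j, τ j ≤ n) (hview : ∀ j, v j = y (t - τ j) j) (j : ι) :
    |(y t - v) j| ≤ ∑ s ∈ Ico (t - n) t, ‖y (s + 1) - y s‖ := by
  rw [PiLp.sub_apply, hview]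
  refine (abs_apply_sub_le_sum_Ico_norm_sub y j (Nat.sub_le t (τ j))).trans ?_
  exact sum_le_sum_of_subset_of_nonneg (Ico_subset_Ico_left (Nat.sub_le_sub_left (hτ j) t))
    fun _ _ _ => norm_nonneg _

theorem norm_sub_view_sq_le (y : ℕ → EuclideanSpace ℝ ι) (v : EuclideanSpace ℝ ι)
    (τ : ι → ℕ) {t n : ℕ} (hτ : ∀ j, τ j ≤ n) (hview : ∀ j, v j = y (t - τ j) j) :
    ‖y t - v‖ ^ 2 ≤
      Fintype.card ι * n * ∑ s ∈ Ico (t - n) t, ‖y (s + 1) - y s‖ ^ 2 := by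
  have hcoord : ∀ j, ((y t - v) j) ^ 2 ≤ n * ∑ s ∈ Ico (t - n) t, ‖y (s + 1) - y s‖ ^ 2 := by
    intro j
    calc ((y t - v) j) ^ 2 ≤ (∑ s ∈ Ico (t - n) t, ‖y (s + 1) - y s‖) ^ 2 := by
          rw [← sq_abs]
          exact pow_le_pow_left₀ (abs_nonneg _) (abs_sub_view_apply_le y v τ hτ hview j) 2
      _ ≤ #(Ico (t - n) t) * ∑ s ∈ Ico (t - n) t, ‖y (s + 1) - y s‖ ^ 2 :=
          sq_sum_le_card_mul_sum_sq
      _ ≤ n * ∑ s ∈ Ico (t - n) t, ‖y (s + 1) - y s‖ ^ 2 := by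
          gcongr
          rw [Nat.card_Ico]
          omega
  calc ‖y t - v‖ ^ 2 = ∑ j, ((y t - v) j) ^ 2 := EuclideanSpace.real_norm_sq_eq _
    _ ≤ ∑ _j : ι, n * ∑ s ∈ Ico (t - n) t, ‖y (s + 1) - y s‖ ^ 2 := sum_le_sum fun j _ => hcoord j
    _ = _ := by rw [sum_const, card_univ, nsmul_eq_mul, mul_assoc]

end DelayedView

theorem stmt14_general {d : ℕ} {Ω : Type*} [MeasurableSpace Ω]
    (μ : Measure Ω)
    (α M : ℝ) (τmax t : ℕ)
    (x : ℕ → Ω → EuclideanSpace ℝ (Fin d)) (v : Ω → EuclideanSpace ℝ (Fin d))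
    (τ : Fin d → ℕ) (hτ : ∀ j, τ j ≤ τmax)
    (hview : ∀ ω j, v ω j = x (t - τ j) ω j)
    (hstep : ∀ s, ∫ ω, ‖x (s + 1) ω - x s ω‖ ^ 2 ∂μ ≤ α ^ 2 * M ^ 2)
    (hint : ∀ s, Integrable (fun ω => ‖x (s + 1) ω - x s ω‖ ^ 2) μ) :
    ∫ ω, ‖x t ω - v ω‖ ^ 2 ∂μ ≤ (d : ℝ) * (τmax : ℝ) ^ 2 * α ^ 2 * M ^ 2 := by
  set S := Ico (t - τmax) t
  have hS : (#S : ℝ) ≤ τmax := by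
    rw [Nat.card_Ico]
    exact_mod_cast (by omega : t - (t - τmax) ≤ τmax)
  calc ∫ ω, ‖x t ω - v ω‖ ^ 2 ∂μ
      ≤ ∫ ω, (d : ℝ) * τmax * ∑ s ∈ S, ‖x (s + 1) ω - x s ω‖ ^ 2 ∂μ := by
        refine integral_mono_of_nonneg (.of_forall fun ω => by positivity)
          ((integrable_finsetSum _ fun s _ => hint s).const_mul _) (.of_forall fun ω => ?_)
        simpa using norm_sub_view_sq_le (fun s => x s ω) (v ω) τ hτ (hview ω)
    _ = d * τmax * ∑ s ∈ S, ∫ ω, ‖x (s + 1) ω - x s ω‖ ^ 2 ∂μ := by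
        rw [integral_const_mul, integral_finsetSum _ fun s _ => hint s]
    _ ≤ d * τmax * ∑ _s ∈ S, α ^ 2 * M ^ 2 := by gcongr with s; exact hstep s
    _ = d * τmax * (#S * (α ^ 2 * M ^ 2)) := by rw [sum_const, nsmul_eq_mul]
    _ ≤ d * τmax * (τmax * (α ^ 2 * M ^ 2)) := by gcongr
    _ = d * τmax ^ 2 * α ^ 2 * M ^ 2 := by ring

/-- asynchronous shared-memory elastic consistency bound.  The processor's
view `v` satisfies `v[j] = x_{t-τⱼ}[j]` componentwise with all delays `τⱼ ≤ τ_max ≤ t`, and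
each SGD update step satisfies `E‖x_{s+1} - x_s‖² ≤ α²M²`.  Then
`E‖x_t - v‖² ≤ d·τ_max²·α²·M²`. -/
theorem stmt14 {d : ℕ} {Ω : Type*} [MeasurableSpace Ω]
    (μ : Measure Ω) [IsProbabilityMeasure μ]
    (α M : ℝ) (hM : 0 ≤ M) (τmax t : ℕ) (ht : τmax ≤ t)
    (x : ℕ → Ω → EuclideanSpace ℝ (Fin d)) (v : Ω → EuclideanSpace ℝ (Fin d))
    (τ : Fin d → ℕ) (hτ : ∀ j, τ j ≤ τmax)
    (hview : ∀ ω j, v ω j = x (t - τ j) ω j)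
    (hstep : ∀ s, ∫ ω, ‖x (s + 1) ω - x s ω‖ ^ 2 ∂μ ≤ α ^ 2 * M ^ 2)
    (hint : ∀ s, Integrable (fun ω => ‖x (s + 1) ω - x s ω‖ ^ 2) μ) :
    ∫ ω, ‖x t ω - v ω‖ ^ 2 ∂μ ≤ (d : ℝ) * (τmax : ℝ) ^ 2 * α ^ 2 * M ^ 2 :=
  stmt14_general μ α M τmax t x v τ hτ hview hstep hint
end

section
/- Let Q: ℝ^d → ℝ^d satisfy ‖Q(w) - w‖² ≤ γ‖w‖² for all w with 0 ≤ γ < 1. Consider the error-feedback recursion ε_{t+1}^i = (αG̃(v_t^i) + ε_t^i) - Q(αG̃(v_t^i) + ε_t^i) over p nodes, starting from ε_0^i = 0, with E[‖G̃(v)‖²] ≤ M². Then for all t, Σ_{i=1}^p E[‖ε_t^i‖²] ≤ (2-γ)γM²α²p/(1-γ)³. -/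
/-!
Young's inequality with weight `1 - γ` turns the compressor bound into the one-step estimate
`‖ε_{t+1}‖² ≤ γ(2-γ)‖ε_t‖² + γ(2-γ)/(1-γ) α²‖G_t‖²`. After taking expectations and summing
over the nodes this is an affine recursion with contraction factor `γ(2-γ) = 1 - (1-γ)² < 1`,
whose fixed point is exactly `(2-γ)γM²α²p/(1-γ)³`; starting from `0`, the recursion never
exceeds its fixed point.
-/

open MeasureTheory

theorem norm_add_sq_le_one_add_mul {E : Type*} [SeminormedAddCommGroup E] (a b : E) {c : ℝ}
    (hc : 0 < c) : ‖a + b‖ ^ 2 ≤ (1 + c) * ‖a‖ ^ 2 + (1 + c⁻¹) * ‖b‖ ^ 2 := by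
  have hab : ‖a + b‖ ^ 2 ≤ (‖a‖ + ‖b‖) ^ 2 := by gcongr; exact norm_add_le a b
  have hcross : 2 * ‖a‖ * ‖b‖ ≤ c * ‖a‖ ^ 2 + c⁻¹ * ‖b‖ ^ 2 := by
    have key : 0 ≤ c⁻¹ * (c * ‖a‖ - ‖b‖) ^ 2 := by positivity
    have hcc : c⁻¹ * c = 1 := inv_mul_cancel₀ hc.ne'
    nlinarith
  nlinarith

theorem le_of_le_mul_add {u : ℕ → ℝ} {A C K : ℝ} (hA : 0 ≤ A) (h0 : u 0 ≤ K)
    (hstep : ∀ t, u (t + 1) ≤ A * u t + C) (hK : A * K + C ≤ K) : ∀ t, u t ≤ K := by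
  intro t
  induction t with
  | zero => exact h0
  | succ t ih => calc
      u (t + 1) ≤ A * u t + C := hstep t
      _ ≤ A * K + C := by gcongr
      _ ≤ K := hK

section Compressor

variable {E : Type*} [NormedAddCommGroup E] {Q : E → E} {γ : ℝ}

theorem norm_sub_compress_sq_le (hγ0 : 0 ≤ γ) (hγ1 : γ < 1)
    (hQ : ∀ w, ‖Q w - w‖ ^ 2 ≤ γ * ‖w‖ ^ 2) (x e : E) :
    ‖(x + e) - Q (x + e)‖ ^ 2
      ≤ γ * (2 - γ) * ‖e‖ ^ 2 + γ * (2 - γ) / (1 - γ) * ‖x‖ ^ 2 := by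
  have h1γ : 0 < 1 - γ := by linarith
  have hcoef : 1 + (1 - γ)⁻¹ = (2 - γ) / (1 - γ) := by field_simp; ring
  calc ‖(x + e) - Q (x + e)‖ ^ 2 ≤ γ * ‖e + x‖ ^ 2 := by rw [norm_sub_rev, add_comm e]; exact hQ _
    _ ≤ γ * ((1 + (1 - γ)) * ‖e‖ ^ 2 + (1 + (1 - γ)⁻¹) * ‖x‖ ^ 2) := by
      gcongr; exact norm_add_sq_le_one_add_mul e x h1γ
    _ = γ * (2 - γ) * ‖e‖ ^ 2 + γ * (2 - γ) / (1 - γ) * ‖x‖ ^ 2 := by rw [hcoef]; ring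

theorem integral_norm_sub_compress_sq_le [NormedSpace ℝ E] {Ω : Type*} [MeasurableSpace Ω]
    {μ : Measure Ω} (hγ0 : 0 ≤ γ) (hγ1 : γ < 1) (hQ : ∀ w, ‖Q w - w‖ ^ 2 ≤ γ * ‖w‖ ^ 2)
    (α M : ℝ) {g e : Ω → E} (hg : ∫ ω, ‖g ω‖ ^ 2 ∂μ ≤ M ^ 2)
    (hg_int : Integrable (fun ω => ‖g ω‖ ^ 2) μ) (he_int : Integrable (fun ω => ‖e ω‖ ^ 2) μ)
    (hnext_int : Integrable (fun ω => ‖(α • g ω + e ω) - Q (α • g ω + e ω)‖ ^ 2) μ) :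
    ∫ ω, ‖(α • g ω + e ω) - Q (α • g ω + e ω)‖ ^ 2 ∂μ
      ≤ γ * (2 - γ) * ∫ ω, ‖e ω‖ ^ 2 ∂μ + γ * (2 - γ) / (1 - γ) * α ^ 2 * M ^ 2 := by
  set A := γ * (2 - γ)
  set B := γ * (2 - γ) / (1 - γ) * α ^ 2
  have hB : 0 ≤ B := by
    have : 0 < 1 - γ := by linarith
    have : 0 ≤ 2 - γ := by linarith
    positivity
  have hpointwise : ∀ ω, ‖(α • g ω + e ω) - Q (α • g ω + e ω)‖ ^ 2
      ≤ A * ‖e ω‖ ^ 2 + B * ‖g ω‖ ^ 2 := fun ω => by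
    have h := norm_sub_compress_sq_le hγ0 hγ1 hQ (α • g ω) (e ω)
    rwa [norm_smul, mul_pow, Real.norm_eq_abs, sq_abs, ← mul_assoc] at h
  calc ∫ ω, ‖(α • g ω + e ω) - Q (α • g ω + e ω)‖ ^ 2 ∂μ
      ≤ ∫ ω, (A * ‖e ω‖ ^ 2 + B * ‖g ω‖ ^ 2) ∂μ :=
        integral_mono hnext_int ((he_int.const_mul A).add (hg_int.const_mul B)) hpointwise
    _ = A * ∫ ω, ‖e ω‖ ^ 2 ∂μ + B * ∫ ω, ‖g ω‖ ^ 2 ∂μ := by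
      rw [integral_add (he_int.const_mul A) (hg_int.const_mul B), integral_const_mul,
        integral_const_mul]
    _ ≤ A * ∫ ω, ‖e ω‖ ^ 2 ∂μ + B * M ^ 2 := by gcongr

end Compressor

theorem stmt16_general {d p : ℕ} {Ω : Type*} [MeasurableSpace Ω]
    (μ : Measure Ω)
    (γ α M : ℝ) (hγ0 : 0 ≤ γ) (hγ1 : γ < 1)
    (Q : EuclideanSpace ℝ (Fin d) → EuclideanSpace ℝ (Fin d))
    (hQ : ∀ w, ‖Q w - w‖ ^ 2 ≤ γ * ‖w‖ ^ 2)
    (G : ℕ → Fin p → Ω → EuclideanSpace ℝ (Fin d))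
    (hG : ∀ t i, ∫ ω, ‖G t i ω‖ ^ 2 ∂μ ≤ M ^ 2)
    (hGint : ∀ t i, Integrable (fun ω => ‖G t i ω‖ ^ 2) μ)
    (ε : ℕ → Fin p → Ω → EuclideanSpace ℝ (Fin d))
    (hεint : ∀ t i, Integrable (fun ω => ‖ε t i ω‖ ^ 2) μ)
    (hε0 : ∀ i ω, ε 0 i ω = 0)
    (hεrec : ∀ t i ω,
      ε (t + 1) i ω = (α • G t i ω + ε t i ω) - Q (α • G t i ω + ε t i ω)) :
    ∀ t, ∑ i : Fin p, ∫ ω, ‖ε t i ω‖ ^ 2 ∂μ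
      ≤ (2 - γ) * γ * M ^ 2 * α ^ 2 * p / (1 - γ) ^ 3 := by
  have h1γ : 0 < 1 - γ := by linarith
  have h2γ : 0 ≤ 2 - γ := by linarith
  refine le_of_le_mul_add (A := γ * (2 - γ)) (C := p * (γ * (2 - γ) / (1 - γ) * α ^ 2 * M ^ 2))
    (by positivity) ?_ (fun t => ?_) (le_of_eq ?_)
  · simp only [hε0, norm_zero, zero_pow two_ne_zero, integral_zero, Finset.sum_const_zero]
    positivity
  · have hnode : ∀ i, ∫ ω, ‖ε (t + 1) i ω‖ ^ 2 ∂μ ≤ γ * (2 - γ) * ∫ ω, ‖ε t i ω‖ ^ 2 ∂μ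
        + γ * (2 - γ) / (1 - γ) * α ^ 2 * M ^ 2 := fun i => by
      have hnext := hεint (t + 1) i
      simp only [hεrec] at hnext ⊢
      exact integral_norm_sub_compress_sq_le hγ0 hγ1 hQ α M (hG t i) (hGint t i) (hεint t i) hnext
    calc _ ≤ _ := Finset.sum_le_sum fun i _ => hnode i
      _ = _ := by simp [Finset.sum_add_distrib, Finset.mul_sum]
  · field_simp
    ring

/-- error-feedback accumulation bound for a `γ`-compressor `Q`
(`‖Q w - w‖² ≤ γ‖w‖²`, `0 ≤ γ < 1`).  With `ε_{t+1}^i = (αG_t^i + ε_t^i) - Q(αG_t^i + ε_t^i)`,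
`ε_0^i = 0`, and `E‖G_t^i‖² ≤ M²`, one has
`Σ_i E‖ε_t^i‖² ≤ (2-γ)γM²α²p/(1-γ)³` for all `t`. -/
theorem stmt16 {d p : ℕ} (hp : 0 < p) {Ω : Type*} [MeasurableSpace Ω]
    (μ : Measure Ω) [IsProbabilityMeasure μ]
    (γ α M : ℝ) (hγ0 : 0 ≤ γ) (hγ1 : γ < 1) (hM : 0 ≤ M)
    (Q : EuclideanSpace ℝ (Fin d) → EuclideanSpace ℝ (Fin d))
    (hQ : ∀ w, ‖Q w - w‖ ^ 2 ≤ γ * ‖w‖ ^ 2)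
    (G : ℕ → Fin p → Ω → EuclideanSpace ℝ (Fin d))
    (hG : ∀ t i, ∫ ω, ‖G t i ω‖ ^ 2 ∂μ ≤ M ^ 2)
    (hGint : ∀ t i, Integrable (fun ω => ‖G t i ω‖ ^ 2) μ)
    (ε : ℕ → Fin p → Ω → EuclideanSpace ℝ (Fin d))
    (hεint : ∀ t i, Integrable (fun ω => ‖ε t i ω‖ ^ 2) μ)
    (hε0 : ∀ i ω, ε 0 i ω = 0)
    (hεrec : ∀ t i ω,
      ε (t + 1) i ω = (α • G t i ω + ε t i ω) - Q (α • G t i ω + ε t i ω)) :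
    ∀ t, ∑ i : Fin p, ∫ ω, ‖ε t i ω‖ ^ 2 ∂μ
      ≤ (2 - γ) * γ * M ^ 2 * α ^ 2 * p / (1 - γ) ^ 3 :=
  stmt16_general μ γ α M hγ0 hγ1 Q hQ G hG hGint ε hεint hε0 hεrec
end

section
/- In the distributed error-feedback compression scheme with true parameter x_{t+1} = x_t - (α/p)Σᵢ G̃(v_t^i) and shared view v_{t+1} = v_t - (1/p)Σᵢ Q(αG̃(v_t^i) + ε_t^i), starting from x_0 = v_0 = 0 and ε_0^i = 0, one has v_t - x_t = (1/p)Σ_{i=1}^p ε_t^i for all t; consequently, if the compressor satisfies ‖Q(w)-w‖² ≤ γ‖w‖² with 0 ≤ γ < 1 and E[‖G̃‖²] ≤ M², then E[‖x_t - v_t‖²] ≤ (2-γ)γM²α²/(1-γ)³. -/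
/-!
Unrolling the three recursions, `v_t - x_t` is the average of the accumulated errors, since
each node's compression residual is exactly what it keeps in `ε^i`. For the error, Young's
inequality with weight `1 - γ` gives
`‖ε_{t+1}‖² ≤ γ‖αG + ε_t‖² ≤ ρ‖ε_t‖² + ρ/(1-γ) α²‖G‖²` with `ρ = γ(2-γ) = 1 - (1-γ)² < 1`,
so `E‖ε_t‖²` never exceeds the fixed point `ρα²M²/(1-γ)³` of this affine recursion.
Averaging over the nodes (Cauchy–Schwarz) transfers that bound to `E‖x_t - v_t‖²`.
-/

open MeasureTheory

theorem errorFeedback_sub_eq_smul_sum {𝕜 E ι : Type*} [Field 𝕜] [AddCommGroup E] [Module 𝕜 E]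
    [Fintype ι] (c α : 𝕜) (Q : E → E) (G ε : ℕ → ι → E) (x v : ℕ → E)
    (hx0 : x 0 = 0) (hv0 : v 0 = 0) (hε0 : ∀ i, ε 0 i = 0)
    (hxrec : ∀ t, x (t + 1) = x t - (α / c) • ∑ i, G t i)
    (hvrec : ∀ t, v (t + 1) = v t - (1 / c) • ∑ i, Q (α • G t i + ε t i))
    (hεrec : ∀ t i, ε (t + 1) i = (α • G t i + ε t i) - Q (α • G t i + ε t i)) (t : ℕ) :
    v t - x t = (1 / c) • ∑ i, ε t i := by
  induction t with
  | zero => simp [hx0, hv0, hε0]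
  | succ t ih =>
    simp only [hvrec, hxrec, hεrec, Finset.sum_sub_distrib, Finset.sum_add_distrib,
      ← Finset.smul_sum, smul_sub, smul_add, smul_smul, ← ih]
    rw [one_div_mul_eq_div]
    abel

theorem norm_add_sq_le_weighted {E : Type*} [SeminormedAddCommGroup E] (a b : E) {η : ℝ}
    (hη : 0 < η) : ‖a + b‖ ^ 2 ≤ (1 + η) / η * ‖a‖ ^ 2 + (1 + η) * ‖b‖ ^ 2 := by
  have young : (‖a‖ + ‖b‖) ^ 2 ≤ (1 + η) / η * ‖a‖ ^ 2 + (1 + η) * ‖b‖ ^ 2 := by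
    have key : (1 + η) / η * ‖a‖ ^ 2 + (1 + η) * ‖b‖ ^ 2 - (‖a‖ + ‖b‖) ^ 2
        = (‖a‖ - η * ‖b‖) ^ 2 / η := by
      field_simp
      ring
    rw [← sub_nonneg, key]
    positivity
  calc ‖a + b‖ ^ 2 ≤ (‖a‖ + ‖b‖) ^ 2 := by gcongr; exact norm_add_le a b
    _ ≤ _ := young

theorem norm_add_sub_compress_sq_le {E : Type*} [SeminormedAddCommGroup E] {γ : ℝ}
    (hγ0 : 0 ≤ γ) (hγ1 : γ < 1) (Q : E → E) (hQ : ∀ w, ‖Q w - w‖ ^ 2 ≤ γ * ‖w‖ ^ 2) (a b : E) :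
    ‖(a + b) - Q (a + b)‖ ^ 2
      ≤ γ * (2 - γ) * ‖b‖ ^ 2 + γ * (2 - γ) / (1 - γ) * ‖a‖ ^ 2 := by
  have hη : 0 < 1 - γ := by linarith
  calc ‖(a + b) - Q (a + b)‖ ^ 2 ≤ γ * ‖a + b‖ ^ 2 := by rw [norm_sub_rev]; exact hQ _
    _ ≤ γ * ((1 + (1 - γ)) / (1 - γ) * ‖a‖ ^ 2 + (1 + (1 - γ)) * ‖b‖ ^ 2) := by
      gcongr; exact norm_add_sq_le_weighted a b hη
    _ = _ := by ring

theorem le_of_le_mul_add_of_mul_add_le {u : ℕ → ℝ} {ρ K C : ℝ} (hρ : 0 ≤ ρ) (h0 : u 0 ≤ C)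
    (hstep : ∀ t, u (t + 1) ≤ ρ * u t + K) (hC : ρ * C + K ≤ C) (t : ℕ) : u t ≤ C := by
  induction t with
  | zero => exact h0
  | succ t ih => linarith [hstep t, mul_le_mul_of_nonneg_left ih hρ]

section ErrorAccumulator

variable {Ω E : Type*} [MeasurableSpace Ω] {μ : Measure Ω} [NormedAddCommGroup E]
  [NormedSpace ℝ E] {γ α : ℝ} {Q : E → E} {g e : ℕ → Ω → E}

theorem integral_norm_sq_errorAccumulator_succ_le (hγ0 : 0 ≤ γ) (hγ1 : γ < 1) {t : ℕ}
    (hQ : ∀ w, ‖Q w - w‖ ^ 2 ≤ γ * ‖w‖ ^ 2)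
    (hgint : Integrable (fun ω => ‖g t ω‖ ^ 2) μ) (heint : Integrable (fun ω => ‖e t ω‖ ^ 2) μ)
    (herec : ∀ ω, e (t + 1) ω = (α • g t ω + e t ω) - Q (α • g t ω + e t ω)) :
    ∫ ω, ‖e (t + 1) ω‖ ^ 2 ∂μ ≤ γ * (2 - γ) * ∫ ω, ‖e t ω‖ ^ 2 ∂μ
      + γ * (2 - γ) / (1 - γ) * α ^ 2 * ∫ ω, ‖g t ω‖ ^ 2 ∂μ := by
  have hpoint : ∀ ω, ‖e (t + 1) ω‖ ^ 2
      ≤ γ * (2 - γ) * ‖e t ω‖ ^ 2 + γ * (2 - γ) / (1 - γ) * α ^ 2 * ‖g t ω‖ ^ 2 := by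
    intro ω
    have h := norm_add_sub_compress_sq_le hγ0 hγ1 Q hQ (α • g t ω) (e t ω)
    rwa [← herec, norm_smul, mul_pow, Real.norm_eq_abs, sq_abs, ← mul_assoc] at h
  have hint := (heint.const_mul (γ * (2 - γ))).add
    (hgint.const_mul (γ * (2 - γ) / (1 - γ) * α ^ 2))
  calc ∫ ω, ‖e (t + 1) ω‖ ^ 2 ∂μ
      ≤ ∫ ω, (γ * (2 - γ) * ‖e t ω‖ ^ 2 + γ * (2 - γ) / (1 - γ) * α ^ 2 * ‖g t ω‖ ^ 2) ∂μ :=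
        integral_mono_of_nonneg (.of_forall fun _ => by positivity) hint (.of_forall hpoint)
    _ = _ := by
      rw [integral_add (heint.const_mul _) (hgint.const_mul _), integral_const_mul,
        integral_const_mul]

theorem integral_norm_sq_errorAccumulator_le (hγ0 : 0 ≤ γ) (hγ1 : γ < 1) (M : ℝ)
    (hQ : ∀ w, ‖Q w - w‖ ^ 2 ≤ γ * ‖w‖ ^ 2)
    (hg : ∀ t, ∫ ω, ‖g t ω‖ ^ 2 ∂μ ≤ M ^ 2)
    (hgint : ∀ t, Integrable (fun ω => ‖g t ω‖ ^ 2) μ)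
    (heint : ∀ t, Integrable (fun ω => ‖e t ω‖ ^ 2) μ) (he0 : ∀ ω, e 0 ω = 0)
    (herec : ∀ t ω, e (t + 1) ω = (α • g t ω + e t ω) - Q (α • g t ω + e t ω)) (t : ℕ) :
    ∫ ω, ‖e t ω‖ ^ 2 ∂μ ≤ (2 - γ) * γ * M ^ 2 * α ^ 2 / (1 - γ) ^ 3 := by
  have hη : 0 < 1 - γ := by linarith
  have hρ : 0 ≤ γ * (2 - γ) := mul_nonneg hγ0 (by linarith)
  refine le_of_le_mul_add_of_mul_add_le (u := fun t => ∫ ω, ‖e t ω‖ ^ 2 ∂μ)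
    (K := γ * (2 - γ) / (1 - γ) * α ^ 2 * M ^ 2) hρ ?_ (fun t => ?_) ?_ t
  · simp only [he0, norm_zero, zero_pow two_ne_zero, integral_zero]
    have : 0 ≤ 2 - γ := by linarith
    positivity
  · have hK : 0 ≤ γ * (2 - γ) / (1 - γ) * α ^ 2 := by positivity
    linarith [integral_norm_sq_errorAccumulator_succ_le (μ := μ) hγ0 hγ1 hQ (hgint t) (heint t)
      (herec t), mul_le_mul_of_nonneg_left (hg t) hK]
  · -- `C = ρα²M²/(1-γ)³` solves `ρC + K = C`, because `1 - ρ = (1 - γ)²`.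
    apply le_of_eq
    field_simp
    ring

end ErrorAccumulator

theorem norm_sum_sq_le_card_mul_sum_norm_sq_s17 {E ι : Type*} [SeminormedAddCommGroup E]
    [Fintype ι] (f : ι → E) : ‖∑ i, f i‖ ^ 2 ≤ Fintype.card ι * ∑ i, ‖f i‖ ^ 2 := by
  calc ‖∑ i, f i‖ ^ 2 ≤ (∑ i, ‖f i‖) ^ 2 := by gcongr; exact norm_sum_le _ _
    _ ≤ _ := by simpa using sq_sum_le_card_mul_sum_sq (s := Finset.univ) (f := fun i => ‖f i‖)

theorem norm_average_sq_le_average_norm_sq {E : Type*} [SeminormedAddCommGroup E]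
    [NormedSpace ℝ E] {p : ℕ} (f : Fin p → E) :
    ‖((1 : ℝ) / p) • ∑ i, f i‖ ^ 2 ≤ (1 / p) * ∑ i, ‖f i‖ ^ 2 := by
  have hcard : ((1 : ℝ) / p) ^ 2 * p = 1 / p := by
    rcases eq_or_ne (p : ℝ) 0 with hp | hp
    · simp [hp]
    · field_simp
  calc ‖((1 : ℝ) / p) • ∑ i, f i‖ ^ 2 = ((1 : ℝ) / p) ^ 2 * ‖∑ i, f i‖ ^ 2 := by
        rw [norm_smul, mul_pow, Real.norm_eq_abs, sq_abs]
    _ ≤ ((1 : ℝ) / p) ^ 2 * (p * ∑ i, ‖f i‖ ^ 2) := by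
        gcongr; simpa using norm_sum_sq_le_card_mul_sum_norm_sq_s17 f
    _ = (1 / p) * ∑ i, ‖f i‖ ^ 2 := by rw [← mul_assoc, hcard]

theorem one_div_mul_sum_le_of_le {p : ℕ} {a : Fin p → ℝ} {C : ℝ} (hC : 0 ≤ C)
    (ha : ∀ i, a i ≤ C) : (1 / p) * ∑ i, a i ≤ C := by
  calc (1 / p) * ∑ i, a i ≤ (1 / p) * (p * C) := by
        gcongr
        simpa using Finset.sum_le_sum fun i (_ : i ∈ Finset.univ) => ha i
    _ ≤ C := by
        rcases eq_or_ne (p : ℝ) 0 with hp | hp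
        · simpa [hp] using hC
        · rw [← mul_assoc, one_div_mul_cancel hp, one_mul]

theorem stmt17_general {d p : ℕ} {Ω : Type*} [MeasurableSpace Ω]
    (μ : Measure Ω)
    (γ α M : ℝ) (hγ0 : 0 ≤ γ) (hγ1 : γ < 1)
    (Q : EuclideanSpace ℝ (Fin d) → EuclideanSpace ℝ (Fin d))
    (hQ : ∀ w, ‖Q w - w‖ ^ 2 ≤ γ * ‖w‖ ^ 2)
    (G : ℕ → Fin p → Ω → EuclideanSpace ℝ (Fin d))
    (hG : ∀ t i, ∫ ω, ‖G t i ω‖ ^ 2 ∂μ ≤ M ^ 2)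
    (hGint : ∀ t i, Integrable (fun ω => ‖G t i ω‖ ^ 2) μ)
    (x v : ℕ → Ω → EuclideanSpace ℝ (Fin d))
    (ε : ℕ → Fin p → Ω → EuclideanSpace ℝ (Fin d))
    (hεint : ∀ t i, Integrable (fun ω => ‖ε t i ω‖ ^ 2) μ)
    (hx0 : ∀ ω, x 0 ω = 0) (hv0 : ∀ ω, v 0 ω = 0) (hε0 : ∀ i ω, ε 0 i ω = 0)
    (hxrec : ∀ t ω, x (t + 1) ω = x t ω - (α / p) • ∑ i : Fin p, G t i ω)
    (hvrec : ∀ t ω,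
      v (t + 1) ω = v t ω - ((1 : ℝ) / p) • ∑ i : Fin p, Q (α • G t i ω + ε t i ω))
    (hεrec : ∀ t i ω,
      ε (t + 1) i ω = (α • G t i ω + ε t i ω) - Q (α • G t i ω + ε t i ω)) :
    (∀ t ω, v t ω - x t ω = ((1 : ℝ) / p) • ∑ i : Fin p, ε t i ω)
    ∧ ∀ t, ∫ ω, ‖x t ω - v t ω‖ ^ 2 ∂μ
        ≤ (2 - γ) * γ * M ^ 2 * α ^ 2 / (1 - γ) ^ 3 := by
  set C := (2 - γ) * γ * M ^ 2 * α ^ 2 / (1 - γ) ^ 3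
  have h2γ : 0 ≤ 2 - γ := by linarith
  have hC : 0 ≤ C := by positivity
  have hdiff : ∀ t ω, v t ω - x t ω = ((1 : ℝ) / p) • ∑ i : Fin p, ε t i ω := fun t ω =>
    errorFeedback_sub_eq_smul_sum (p : ℝ) α Q (fun t i => G t i ω) (fun t i => ε t i ω)
      (fun t => x t ω) (fun t => v t ω) (hx0 ω) (hv0 ω) (fun i => hε0 i ω)
      (fun t => hxrec t ω) (fun t => hvrec t ω) (fun t i => hεrec t i ω) t
  refine ⟨hdiff, fun t => ?_⟩
  have herr : ∀ i, ∫ ω, ‖ε t i ω‖ ^ 2 ∂μ ≤ C := fun i =>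
    integral_norm_sq_errorAccumulator_le hγ0 hγ1 M hQ (hG · i) (hGint · i) (hεint · i)
      (hε0 i) (hεrec · i) t
  have hpoint : ∀ ω, ‖x t ω - v t ω‖ ^ 2 ≤ (1 / p) * ∑ i, ‖ε t i ω‖ ^ 2 := fun ω => by
    rw [norm_sub_rev, hdiff]
    exact norm_average_sq_le_average_norm_sq _
  have hint : Integrable (fun ω => (1 / (p : ℝ)) * ∑ i, ‖ε t i ω‖ ^ 2) μ :=
    (integrable_finsetSum _ fun i _ => hεint t i).const_mul _
  calc ∫ ω, ‖x t ω - v t ω‖ ^ 2 ∂μ ≤ ∫ ω, (1 / p) * ∑ i, ‖ε t i ω‖ ^ 2 ∂μ :=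
        integral_mono_of_nonneg (.of_forall fun _ => by positivity) hint (.of_forall hpoint)
    _ = (1 / p) * ∑ i, ∫ ω, ‖ε t i ω‖ ^ 2 ∂μ := by
        rw [integral_const_mul, integral_finsetSum _ fun i _ => hεint t i]
    _ ≤ C := one_div_mul_sum_le_of_le hC herr

/-- distributed error-feedback compression.  With true parameter
`x_{t+1} = x_t - (α/p)Σᵢ G_t^i`, shared view `v_{t+1} = v_t - (1/p)Σᵢ Q(αG_t^i + ε_t^i)`,
error accumulators `ε_{t+1}^i = (αG_t^i + ε_t^i) - Q(αG_t^i + ε_t^i)`, and zero initial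
conditions, one has `v_t - x_t = (1/p)Σᵢ ε_t^i` for all `t`; consequently, if `Q` is a
`γ`-compressor (`0 ≤ γ < 1`) and `E‖G_t^i‖² ≤ M²`, then
`E‖x_t - v_t‖² ≤ (2-γ)γM²α²/(1-γ)³`. -/
theorem stmt17 {d p : ℕ} (hp : 0 < p) {Ω : Type*} [MeasurableSpace Ω]
    (μ : Measure Ω) [IsProbabilityMeasure μ]
    (γ α M : ℝ) (hγ0 : 0 ≤ γ) (hγ1 : γ < 1) (hM : 0 ≤ M)
    (Q : EuclideanSpace ℝ (Fin d) → EuclideanSpace ℝ (Fin d))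
    (hQ : ∀ w, ‖Q w - w‖ ^ 2 ≤ γ * ‖w‖ ^ 2)
    (G : ℕ → Fin p → Ω → EuclideanSpace ℝ (Fin d))
    (hG : ∀ t i, ∫ ω, ‖G t i ω‖ ^ 2 ∂μ ≤ M ^ 2)
    (hGint : ∀ t i, Integrable (fun ω => ‖G t i ω‖ ^ 2) μ)
    (x v : ℕ → Ω → EuclideanSpace ℝ (Fin d))
    (ε : ℕ → Fin p → Ω → EuclideanSpace ℝ (Fin d))
    (hεint : ∀ t i, Integrable (fun ω => ‖ε t i ω‖ ^ 2) μ)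
    (hx0 : ∀ ω, x 0 ω = 0) (hv0 : ∀ ω, v 0 ω = 0) (hε0 : ∀ i ω, ε 0 i ω = 0)
    (hxrec : ∀ t ω, x (t + 1) ω = x t ω - (α / p) • ∑ i : Fin p, G t i ω)
    (hvrec : ∀ t ω,
      v (t + 1) ω = v t ω - ((1 : ℝ) / p) • ∑ i : Fin p, Q (α • G t i ω + ε t i ω))
    (hεrec : ∀ t i ω,
      ε (t + 1) i ω = (α • G t i ω + ε t i ω) - Q (α • G t i ω + ε t i ω)) :
    (∀ t ω, v t ω - x t ω = ((1 : ℝ) / p) • ∑ i : Fin p, ε t i ω)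
    ∧ ∀ t, ∫ ω, ‖x t ω - v t ω‖ ^ 2 ∂μ
        ≤ (2 - γ) * γ * M ^ 2 * α ^ 2 / (1 - γ) ^ 3 :=
  stmt17_general μ γ α M hγ0 hγ1 Q hQ G hG hGint x v ε hεint hx0 hv0 hε0 hxrec hvrec hεrec
end

section
/- The one-bit quantizer Q defined by setting every nonnegative coordinate of w to the mean of the nonnegative coordinates and every negative coordinate to the mean of the negative coordinates satisfies ‖Q(w) - w‖² ≤ (1 - 1/d)‖w‖² for all w ∈ ℝ^d. -/
open scoped Classical

/-!
Split the coordinates by sign. On each group `Q` replaces the coordinates by their mean `m`, and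
`∑ (m - wᵢ)² = ∑ wᵢ² - k m² = ∑ wᵢ² - (∑ wᵢ)² / k` for a group of size `k`. Within a group all
coordinates have the same sign, so `(∑ wᵢ)² ≥ ∑ wᵢ²`, and the error on the group is at most
`(1 - 1/k) ∑ wᵢ² ≤ (1 - 1/d) ∑ wᵢ²`. Adding the two groups gives the claim.
-/

open Finset

namespace Finset

variable {ι : Type*} (s : Finset ι) (f : ι → ℝ)

theorem sum_sq_le_sq_sum_of_nonpos (hf : ∀ i ∈ s, f i ≤ 0) :
    ∑ i ∈ s, f i ^ 2 ≤ (∑ i ∈ s, f i) ^ 2 := by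
  simpa only [neg_sq, sum_neg_distrib] using
    sum_sq_le_sq_sum_of_nonneg (s := s) (f := fun i => -f i) fun i hi => neg_nonneg.2 (hf i hi)

theorem sum_sq_mean_sub_eq :
    ∑ i ∈ s, ((∑ j ∈ s, f j) / #s - f i) ^ 2 = ∑ i ∈ s, f i ^ 2 - (∑ i ∈ s, f i) ^ 2 / #s := by
  rcases s.eq_empty_or_nonempty with rfl | hs
  · simp
  have hcard : (#s : ℝ) ≠ 0 := by exact_mod_cast hs.card_pos.ne'
  simp only [sub_sq, sum_add_distrib, sum_sub_distrib, sum_const, nsmul_eq_mul, ← mul_sum]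
  field_simp
  ring

variable {s f}

theorem sum_sq_mean_sub_le (h : ∑ i ∈ s, f i ^ 2 ≤ (∑ i ∈ s, f i) ^ 2) {n : ℕ} (hn : #s ≤ n) :
    ∑ i ∈ s, ((∑ j ∈ s, f j) / #s - f i) ^ 2 ≤ (1 - 1 / (n : ℝ)) * ∑ i ∈ s, f i ^ 2 := by
  rcases s.eq_empty_or_nonempty with rfl | hs
  · simp
  have hcard : (0 : ℝ) < #s := by exact_mod_cast hs.card_pos
  have hn' : (#s : ℝ) ≤ n := by exact_mod_cast hn
  have hsq : 0 ≤ ∑ i ∈ s, f i ^ 2 := sum_nonneg fun i _ => sq_nonneg (f i)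
  calc ∑ i ∈ s, ((∑ j ∈ s, f j) / #s - f i) ^ 2
      = ∑ i ∈ s, f i ^ 2 - (∑ i ∈ s, f i) ^ 2 / #s := sum_sq_mean_sub_eq s f
    _ ≤ ∑ i ∈ s, f i ^ 2 - (∑ i ∈ s, f i ^ 2) / #s := by gcongr
    _ ≤ ∑ i ∈ s, f i ^ 2 - (∑ i ∈ s, f i ^ 2) / n := by gcongr
    _ = (1 - 1 / (n : ℝ)) * ∑ i ∈ s, f i ^ 2 := by ring

end Finset

section SignMeanQuantize

variable {ι : Type*} [Fintype ι]

noncomputable def signMeanQuantize (w : ι → ℝ) : ι → ℝ := fun i =>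
  if 0 ≤ w i then
    (∑ j ∈ Finset.univ.filter (fun j : ι => 0 ≤ w j), w j) /
      (Finset.univ.filter (fun j : ι => 0 ≤ w j)).card
  else
    (∑ j ∈ Finset.univ.filter (fun j : ι => w j < 0), w j) /
      (Finset.univ.filter (fun j : ι => w j < 0)).card

theorem sum_sq_signMeanQuantize_sub_le (w : ι → ℝ) :
    ∑ i, (signMeanQuantize w i - w i) ^ 2 ≤ (1 - 1 / (Fintype.card ι : ℝ)) * ∑ i, w i ^ 2 := by
  set P := univ.filter fun j => 0 ≤ w j
  set N := univ.filter fun j => w j < 0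
  have hN : univ.filter (fun j => ¬0 ≤ w j) = N := by simp only [N, not_le]
  have hP_error : ∑ i ∈ P, (signMeanQuantize w i - w i) ^ 2
      ≤ (1 - 1 / (Fintype.card ι : ℝ)) * ∑ i ∈ P, w i ^ 2 := by
    rw [sum_congr rfl fun i hi => by rw [signMeanQuantize, if_pos (mem_filter.1 hi).2]]
    exact sum_sq_mean_sub_le (sum_sq_le_sq_sum_of_nonneg fun i hi => (mem_filter.1 hi).2)
      (card_le_univ P)
  have hN_error : ∑ i ∈ N, (signMeanQuantize w i - w i) ^ 2
      ≤ (1 - 1 / (Fintype.card ι : ℝ)) * ∑ i ∈ N, w i ^ 2 := by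
    rw [sum_congr rfl fun i hi => by
      rw [signMeanQuantize, if_neg (not_le.2 (mem_filter.1 hi).2)]]
    exact sum_sq_mean_sub_le
      (sum_sq_le_sq_sum_of_nonpos N w fun i hi => (mem_filter.1 hi).2.le) (card_le_univ N)
  rw [← sum_filter_add_sum_filter_not univ (fun j => 0 ≤ w j),
    ← sum_filter_add_sum_filter_not univ (fun j => 0 ≤ w j) (fun i => w i ^ 2), hN, mul_add]
  exact add_le_add hP_error hN_error

end SignMeanQuantize

theorem stmt19_general {d : ℕ} (w : EuclideanSpace ℝ (Fin d)) :
    ‖(show EuclideanSpace ℝ (Fin d) from WithLp.toLp 2 fun i =>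
        if 0 ≤ w i then
          (∑ j ∈ Finset.univ.filter (fun j : Fin d => 0 ≤ w j), w j) /
            (Finset.univ.filter (fun j : Fin d => 0 ≤ w j)).card
        else
          (∑ j ∈ Finset.univ.filter (fun j : Fin d => w j < 0), w j) /
            (Finset.univ.filter (fun j : Fin d => w j < 0)).card) - w‖ ^ 2
      ≤ (1 - 1 / (d : ℝ)) * ‖w‖ ^ 2 := by
  change ‖WithLp.toLp 2 (signMeanQuantize w.ofLp) - w‖ ^ 2 ≤ _
  simpa only [EuclideanSpace.norm_sq_eq, Real.norm_eq_abs, sq_abs, PiLp.sub_apply,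
    Fintype.card_fin] using sum_sq_signMeanQuantize_sub_le w.ofLp

/-- the one-bit quantizer, which replaces every nonnegative coordinate of `w`
by the mean of the nonnegative coordinates and every negative coordinate by the mean of the
negative coordinates, satisfies `‖Q(w) - w‖² ≤ (1 - 1/d)‖w‖²`. -/
theorem stmt19 {d : ℕ} (hd : 0 < d) (w : EuclideanSpace ℝ (Fin d)) :
    ‖(show EuclideanSpace ℝ (Fin d) from WithLp.toLp 2 fun i =>
        if 0 ≤ w i then
          (∑ j ∈ Finset.univ.filter (fun j : Fin d => 0 ≤ w j), w j) /
            (Finset.univ.filter (fun j : Fin d => 0 ≤ w j)).card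
        else
          (∑ j ∈ Finset.univ.filter (fun j : Fin d => w j < 0), w j) /
            (Finset.univ.filter (fun j : Fin d => w j < 0)).card) - w‖ ^ 2
      ≤ (1 - 1 / (d : ℝ)) * ‖w‖ ^ 2 :=
  stmt19_general w
end
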